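/- Let |ψ⟩ be a unit vector in ℂ² ⊗ ℂ² such that |⟨s|ψ⟩| = 1/2 for each of the four standard basis vectors |s⟩ ∈ {|00⟩, |01⟩, |10⟩, |11⟩}. Then the sum over the four standard basis vectors, Σ_s U_{|s⟩} |ψ⟩⟨ψ| U_{|s⟩}, equals the identity operator I on ℂ² ⊗ ℂ². Consequently the uniform mixture ¼ Σ_s U_{|s⟩}|ψ⟩⟨ψ|U_{|s⟩} is the maximally mixed state I/4, so an eavesdropper holding both shares but not knowing the secret s gains no information about s. -/

import Mathlib

open scoped ComplexConjugate
open Finset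

noncomputable section

/-- Standard (computational) basis vector `|s⟩` of the two-qubit space `ℂ² ⊗ ℂ²`. -/
def e (s : Fin 2 × Fin 2) : Fin 2 × Fin 2 → ℂ := fun p => if p = s then 1 else 0

/-- The standard inner product `⟨u|v⟩` on two-qubit vectors
(conjugate-linear in the first argument). -/
def inner2 (u v : Fin 2 × Fin 2 → ℂ) : ℂ := ∑ p, conj (u p) * v p

/-- The Grover reflection operator `U_{|x⟩} = I - 2|x⟩⟨x|` applied to `v`. -/
def grover (x v : Fin 2 × Fin 2 → ℂ) : Fin 2 × Fin 2 → ℂ :=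
  v - (2 * inner2 x v) • x

/-- The outer product `|v⟩⟨v|` of a two-qubit vector, as a matrix. -/
def outer (v : Fin 2 × Fin 2 → ℂ) : Matrix (Fin 2 × Fin 2) (Fin 2 × Fin 2) ℂ :=
  Matrix.of fun p q => v p * conj (v q)

lemma inner_e (ψ : Fin 2 × Fin 2 → ℂ) (s : Fin 2 × Fin 2) : inner2 (e s) ψ = ψ s := by
  simp [inner2, e, apply_ite (starRingEnd ℂ)]

lemma mulconj (ψ : Fin 2 × Fin 2 → ℂ) (hover : ∀ s : Fin 2 × Fin 2, ‖inner2 (e s) ψ‖ = 1 / 2)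
    (p : Fin 2 × Fin 2) : ψ p * conj (ψ p) = 1 / 4 := by
  have h := hover p
  rw [inner_e] at h
  have := Complex.mul_conj (ψ p)
  rw [Complex.normSq_eq_norm_sq, h] at this
  rw [this]; norm_num

/-- If `|ψ⟩` is a unit vector with `|⟨s|ψ⟩| = 1/2` for every standard basis vector `|s⟩`,
then `Σ_s U_{|s⟩}|ψ⟩⟨ψ|U_{|s⟩} = I`, hence the uniform mixture
`¼ Σ_s U_{|s⟩}|ψ⟩⟨ψ|U_{|s⟩}` is the maximally mixed state `I/4`. -/
theorem mixture_of_shares_is_maximally_mixed (ψ : Fin 2 × Fin 2 → ℂ)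
    (hψ : inner2 ψ ψ = 1) (hover : ∀ s : Fin 2 × Fin 2, ‖inner2 (e s) ψ‖ = 1 / 2) :
    (∑ s : Fin 2 × Fin 2, outer (grover (e s) ψ)) = (1 : Matrix (Fin 2 × Fin 2) (Fin 2 × Fin 2) ℂ) ∧
    ((1 / 4 : ℂ) • ∑ s : Fin 2 × Fin 2, outer (grover (e s) ψ))
      = (1 / 4 : ℂ) • (1 : Matrix (Fin 2 × Fin 2) (Fin 2 × Fin 2) ℂ) := by
  have hmc := mulconj ψ hover
  have key : (∑ s : Fin 2 × Fin 2, outer (grover (e s) ψ))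
      = (1 : Matrix (Fin 2 × Fin 2) (Fin 2 × Fin 2) ℂ) := by
    ext p q
    simp only [Matrix.sum_apply, outer, grover, inner_e, Matrix.of_apply, Pi.sub_apply,
      Pi.smul_apply, e, smul_eq_mul, Matrix.one_apply]
    rw [show (Finset.univ : Finset (Fin 2 × Fin 2)) = {(0,0),(0,1),(1,0),(1,1)} by decide,
      Finset.sum_insert (by decide), Finset.sum_insert (by decide),
      Finset.sum_insert (by decide), Finset.sum_singleton]
    have h00 := hmc (0,0); have h01 := hmc (0,1); have h10 := hmc (1,0); have h11 := hmc (1,1)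
    fin_cases p <;> fin_cases q <;>
      simp_all [Prod.ext_iff, map_sub, map_mul, map_ofNat] <;> ring_nf <;>
      first
      | linear_combination hmc 0 0 | linear_combination hmc 0 1
      | linear_combination hmc 1 0 | linear_combination hmc 1 1
      | linear_combination h00 | linear_combination h01
      | linear_combination h10 | linear_combination h11
      | linear_combination (exp := 1) (0:ℂ)
  exact ⟨key, by rw [key]⟩


end
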